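/- arXiv:1809.10983 — 6 statements merged into one kernel-verified Lean document; each statement's English description precedes it below -/
import Mathlib

section
/- For all t₁, t₂ with t₁ ≠ 0, t₂ ≠ 0 and 4t₂⁴ + 4t₁² + 1 ≠ 0, setting u = −(4t₂⁴ + 4t₁² + 1)/(8 t₁ t₂), x = 1/t₂, y = −(4t₂⁴ − 4t₁² + 1)/(8 t₁ t₂), the equation x⁴ + 4x²y² + 4 = 4u²x² holds. -/
theorem quartic_surface_param (t₁ t₂ : ℝ) (h1 : t₁ ≠ 0) (h2 : t₂ ≠ 0)
    (h3 : 4*t₂^4 + 4*t₁^2 + 1 ≠ 0) :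
    (1/t₂)^4 + 4*(1/t₂)^2*(-(4*t₂^4 - 4*t₁^2 + 1)/(8*t₁*t₂))^2 + 4 =
    4*(-(4*t₂^4 + 4*t₁^2 + 1)/(8*t₁*t₂))^2*(1/t₂)^2 := by
  field_simp
  ring
end

section
/- For all t₁, t₂, t₃ nonzero, setting u₁ = ((t₁+t₂+t₃)² − 4t₁t₂ − 1)/(4t₂t₃), u₂ = ((t₁+t₂+t₃)² − 4t₁t₂ − 1)/(4t₁t₃), u₃ = ((t₁+t₂+t₃)² − 4t₁t₂ − 1)/(4t₁t₂) + 1, and u = ((t₁+t₂+t₃)² − 4t₁t₂ − 1)/(4t₁t₂t₃), the identity u² = (1 − u₁ − u₂ − u₃)² − 4u₁u₂u₃ holds. -/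
theorem delta6_param (t₁ t₂ t₃ : ℝ) (h1 : t₁ ≠ 0) (h2 : t₂ ≠ 0) (h3 : t₃ ≠ 0) :
    (((t₁+t₂+t₃)^2 - 4*t₁*t₂ - 1)/(4*t₁*t₂*t₃))^2 =
    (1 - ((t₁+t₂+t₃)^2 - 4*t₁*t₂ - 1)/(4*t₂*t₃)
       - ((t₁+t₂+t₃)^2 - 4*t₁*t₂ - 1)/(4*t₁*t₃)
       - (((t₁+t₂+t₃)^2 - 4*t₁*t₂ - 1)/(4*t₁*t₂) + 1))^2
    - 4*(((t₁+t₂+t₃)^2 - 4*t₁*t₂ - 1)/(4*t₂*t₃))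
       *(((t₁+t₂+t₃)^2 - 4*t₁*t₂ - 1)/(4*t₁*t₃))
       *(((t₁+t₂+t₃)^2 - 4*t₁*t₂ - 1)/(4*t₁*t₂) + 1) := by
  field_simp
  ring
end

section
/- For all t with t⁴ + 1 ≠ 0, setting x = t(t² + 1)/(t⁴ + 1) and y = t(t² − 1)/(t⁴ + 1) (taking the appropriate sign), one has x⁴ + 2x²y² − x² + y⁴ + y² = 0; equivalently, −2x² + √(8x² + 1) − 1 = 2y² is a perfect square of a rational function in t. -/
/-! On the curve the equation is a quadratic in `y²`, namely `(2y² + 2x² + 1)² = 8x² + 1`; since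
`2y² + 2x² + 1 ≥ 0` this determines `2y²` through `√(8x² + 1)`. So it suffices that the rational
point lies on the curve, which is a polynomial identity once the denominator `t⁴ + 1 > 0` is
cleared. -/

theorem two_mul_sq_eq_of_lemniscate {x y : ℝ} (h : x^4 + 2*x^2*y^2 - x^2 + y^4 + y^2 = 0) :
    -2*x^2 + Real.sqrt (8*x^2 + 1) - 1 = 2*y^2 := by
  have hsq : 8*x^2 + 1 = (2*y^2 + 2*x^2 + 1)^2 := by linear_combination (-4) * h
  rw [hsq, Real.sqrt_sq (by positivity)]
  ring

theorem lemniscate_rational_point (t : ℝ) :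
    let x := t*(t^2 + 1)/(t^4 + 1)
    let y := t*(t^2 - 1)/(t^4 + 1)
    x^4 + 2*x^2*y^2 - x^2 + y^4 + y^2 = 0 := by
  have : t^4 + 1 ≠ 0 := by positivity
  field_simp
  ring

theorem lemniscate_param_general (t : ℝ) :
    let x := t*(t^2 + 1)/(t^4 + 1)
    let y := t*(t^2 - 1)/(t^4 + 1)
    x^4 + 2*x^2*y^2 - x^2 + y^4 + y^2 = 0 ∧
    -2*x^2 + Real.sqrt (8*x^2 + 1) - 1 = 2*y^2 :=
  ⟨lemniscate_rational_point t, two_mul_sq_eq_of_lemniscate (lemniscate_rational_point t)⟩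

theorem lemniscate_param (t : ℝ) (ht : t^4 + 1 ≠ 0) :
    let x := t*(t^2 + 1)/(t^4 + 1)
    let y := t*(t^2 - 1)/(t^4 + 1)
    x^4 + 2*x^2*y^2 - x^2 + y^4 + y^2 = 0 ∧
    -2*x^2 + Real.sqrt (8*x^2 + 1) - 1 = 2*y^2 :=
  lemniscate_param_general t
end

section
/- There do not exist nonconstant rational functions φ_z, φ_u ∈ ℚ(t) such that φ_u(t)² = (1 + 4φ_z(t)) · φ_z(t) · (φ_z(t) − 4) identically; i.e., the curve u² = (1+4z)·z·(z−4) admits no nonconstant rational parametrization. -/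
/-!
Write `z = s / t` with `s, t` coprime polynomials. Clearing denominators, `s t (s - 4t) (s + t/4)`
is a square, and over an algebraically closed field its four pairwise coprime factors are then
squares themselves. After rescaling `t`, this is a Legendre configuration: `s = a²`, `t = b²`,
`s - t` and `s - μ² t` are squares. Then `a ± b` and `a ± μ b` are squares too, being coprime
factors of squares, and a linear change of variables turns them into a Legendre configuration of
half the degree. Infinite descent forces `s` and `t` to be constant.
-/

open Polynomial

theorem IsCoprime.mul_add_mul {R : Type*} [CommRing R] {s t : R} (h : IsCoprime s t)
    {a b c d : R} (hdet : IsUnit (a * d - b * c)) : IsCoprime (a * s + b * t) (c * s + d * t) := by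
  obtain ⟨x, y, hxy⟩ := h
  obtain ⟨u, hu⟩ := hdet
  exact ⟨↑u⁻¹ * (x * d - y * c), ↑u⁻¹ * (y * a - x * b), by
    linear_combination (↑u⁻¹ : R) * (a * d - b * c) * hxy - ↑u⁻¹ * hu + u.inv_mul⟩

namespace Polynomial

variable {K : Type*} [Field K]

theorem isCoprime_C_mul_add_C_mul {s t : K[X]} (h : IsCoprime s t) {a b c d : K}
    (hdet : a * d - b * c ≠ 0) : IsCoprime (C a * s + C b * t) (C c * s + C d * t) :=
  h.mul_add_mul (by rw [← C_mul, ← C_mul, ← C_sub]; exact isUnit_C.mpr hdet.isUnit)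

theorem isCoprime_sub_C_mul_sub_C_mul {s t : K[X]} (h : IsCoprime s t) {x y : K} (hxy : x ≠ y) :
    IsCoprime (s - C x * t) (s - C y * t) := by
  convert isCoprime_C_mul_add_C_mul h (a := 1) (b := -x) (c := 1) (d := -y) ?_ using 1
  · simp [sub_eq_add_neg]
  · simp [sub_eq_add_neg]
  · exact fun h' ↦ hxy (by linear_combination h')

theorem natDegree_C_mul_add_C_mul_le (a b : K) (p q : K[X]) :
    (C a * p + C b * q).natDegree ≤ max p.natDegree q.natDegree :=
  (natDegree_add_le _ _).trans (max_le_max (natDegree_C_mul_le _ _) (natDegree_C_mul_le _ _))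

/-- `s / t` is the `x`-coordinate of a point of the Legendre curve `y² = x (x - 1) (x - l)`
over `K(X)`, written so that each of the four factors is a square. -/
def LegendreSquares (l : K) (s t : K[X]) : Prop :=
  IsCoprime s t ∧ IsSquare s ∧ IsSquare t ∧ IsSquare (s - t) ∧ IsSquare (s - C l * t)

section IsAlgClosed

variable [IsAlgClosed K]

theorem isSquare_C (c : K) : IsSquare (C c) :=
  let ⟨z, hz⟩ := IsAlgClosed.exists_eq_mul_self c
  ⟨C z, by rw [hz, C_mul]⟩

theorem isSquare_of_isCoprime_of_isSquare_mul {p q : K[X]} (h : IsCoprime p q)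
    (hpq : IsSquare (p * q)) : IsSquare p := by
  obtain ⟨v, hv⟩ := hpq
  obtain ⟨d, u, hu⟩ := exists_associated_pow_of_mul_eq_pow' h (hv.trans (sq v).symm)
  obtain ⟨c, -, hc⟩ := isUnit_iff.mp u.isUnit
  rw [← hu, ← hc]
  exact (IsSquare.sq d).mul (isSquare_C c)

end IsAlgClosed

variable [NeZero (2 : K)]

theorem isCoprime_add_C_mul_sub_C_mul {p q : K[X]} (h : IsCoprime p q) {c : K} (hc : c ≠ 0) :
    IsCoprime (p + C c * q) (p - C c * q) := by
  convert isCoprime_sub_C_mul_sub_C_mul h (x := -c) (y := c) ?_ using 1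
  · simp [sub_eq_add_neg]
  · exact fun h' ↦ hc (mul_left_cancel₀ (two_ne_zero (α := K)) (by linear_combination -h'))

theorem max_natDegree_add_sub (p q : K[X]) :
    max (p + q).natDegree (p - q).natDegree = max p.natDegree q.natDegree := by
  have h2 : C (2⁻¹ : K) * 2 = 1 := by
    rw [← C_ofNat, ← C_mul, inv_mul_cancel₀ two_ne_zero, C_1]
  have hp : p = C 2⁻¹ * (p + q) + C 2⁻¹ * (p - q) := by linear_combination -p * h2
  have hq : q = C 2⁻¹ * (p + q) + C (-2⁻¹) * (p - q) := by
    rw [C_neg]; linear_combination -q * h2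
  refine le_antisymm (max_le (natDegree_add_le p q) (natDegree_sub_le p q)) (max_le ?_ ?_)
  · exact (congrArg natDegree hp).trans_le (natDegree_C_mul_add_C_mul_le _ _ _ _)
  · exact (congrArg natDegree hq).trans_le (natDegree_C_mul_add_C_mul_le _ _ _ _)

variable [IsAlgClosed K]

theorem isSquare_add_sub_of_isSquare_mul_self_sub {a b : K[X]} (h : IsCoprime a b) {c : K}
    (hc : c ≠ 0) (hsq : IsSquare (a * a - C (c * c) * (b * b))) :
    IsSquare (a + C c * b) ∧ IsSquare (a - C c * b) := by
  have hcop := isCoprime_add_C_mul_sub_C_mul h hc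
  have hfac : a * a - C (c * c) * (b * b) = (a + C c * b) * (a - C c * b) := by rw [C_mul]; ring
  rw [hfac] at hsq
  exact ⟨isSquare_of_isCoprime_of_isSquare_mul hcop hsq,
    isSquare_of_isCoprime_of_isSquare_mul hcop.symm (by rwa [mul_comm])⟩

/-- With `c = (μ - 1) / (μ + 1)` and `l = ((μ + 1) / (μ - 1))²`, the four polynomials
`s = a + b`, `t = c (a - b)`, `s - t`, `s - l t` are constant multiples of `a ± b`, `a ± μ b`. -/
theorem exists_legendreSquares_add_C_mul_sub {a b : K[X]} (hab : IsCoprime a b) {μ : K}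
    (hμ0 : μ ≠ 0) (hμsub : μ - 1 ≠ 0) (hμadd : μ + 1 ≠ 0) (hadd : IsSquare (a + b))
    (hsub : IsSquare (a - b)) (haddμ : IsSquare (a + C μ * b))
    (hsubμ : IsSquare (a - C μ * b)) :
    ∃ c l : K, c ≠ 0 ∧ l ≠ 0 ∧ l ≠ 1 ∧ LegendreSquares l (a + b) (C c * (a - b)) := by
  obtain ⟨k, hk⟩ : ∃ k : K, k * (μ + 1) = 2 := ⟨2 / (μ + 1), div_mul_cancel₀ _ hμadd⟩
  obtain ⟨m, hm⟩ : ∃ m : K, m * (μ - 1) = -2 :=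
    ⟨-2 / (μ - 1), div_mul_cancel₀ _ hμsub⟩
  have hmk : (1 - m) * (1 - k) = 1 := mul_left_cancel₀ (mul_ne_zero hμsub hμadd) (by
    linear_combination (k * (μ + 1) - (μ + 1)) * hm + (-(μ - 1) - 2) * hk)
  have hk0 : 1 - k ≠ 0 := right_ne_zero_of_mul_eq_one hmk
  have hkC := congrArg C hk
  have hmC := congrArg C hm
  simp only [map_mul, map_add, map_sub, map_neg, map_one, map_ofNat] at hkC hmC
  refine ⟨1 - k, (1 - m) ^ 2, hk0, pow_ne_zero 2 (left_ne_zero_of_mul_eq_one hmk), ?_,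
    ⟨?_, hadd, (isSquare_C _).mul hsub, ?_, ?_⟩⟩
  · intro h
    rcases mul_eq_zero.mp (show m * (m - 2) = 0 by linear_combination h) with h0 | h2
    · rw [h0, zero_mul] at hm
      exact two_ne_zero (neg_eq_zero.mp hm.symm)
    · exact hμ0 (mul_left_cancel₀ two_ne_zero (by linear_combination hm - (μ - 1) * h2))
  · have hcop := isCoprime_add_C_mul_sub_C_mul hab (one_ne_zero (α := K))
    rw [C_1, one_mul] at hcop
    exact (isCoprime_mul_unit_left_right (isUnit_C.mpr hk0.isUnit) _ _).mpr hcop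
  · have : a + b - C (1 - k) * (a - b) = C k * (a + C μ * b) := by
      rw [C_sub, C_1]; linear_combination (-b) * hkC
    rw [this]; exact (isSquare_C k).mul haddμ
  · have : a + b - C ((1 - m) ^ 2) * (C (1 - k) * (a - b)) = C m * (a - C μ * b) := by
      rw [← mul_assoc, ← C_mul,
        show (1 - m) ^ 2 * (1 - k) = 1 - m by linear_combination (1 - m) * hmk, C_sub, C_1]
      linear_combination b * hmC
    rw [this]; exact (isSquare_C m).mul hsubμ

theorem LegendreSquares.exists_halving {l : K} (hl0 : l ≠ 0) (hl1 : l ≠ 1) {s t : K[X]}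
    (h : LegendreSquares l s t) : ∃ (l' : K) (s' t' : K[X]), l' ≠ 0 ∧ l' ≠ 1 ∧
      LegendreSquares l' s' t' ∧
      max s.natDegree t.natDegree = 2 * max s'.natDegree t'.natDegree := by
  obtain ⟨hst, ⟨a, rfl⟩, ⟨b, rfl⟩, hst1, hstl⟩ := h
  obtain ⟨μ, rfl⟩ := IsAlgClosed.exists_eq_mul_self l
  have hμ0 : μ ≠ 0 := by rintro rfl; simp at hl0
  have hμsub : μ - 1 ≠ 0 := fun h ↦ hl1 (by linear_combination (μ + 1) * h)
  have hμadd : μ + 1 ≠ 0 := fun h ↦ hl1 (by linear_combination (μ - 1) * h)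
  have hab : IsCoprime a b := hst.of_mul_left_left.of_mul_right_left
  obtain ⟨hadd, hsub⟩ := isSquare_add_sub_of_isSquare_mul_self_sub hab one_ne_zero
    (by simpa using hst1)
  rw [C_1, one_mul] at hadd hsub
  obtain ⟨haddμ, hsubμ⟩ := isSquare_add_sub_of_isSquare_mul_self_sub hab hμ0 hstl
  obtain ⟨c, l', hc, hl0', hl1', hleg⟩ :=
    exists_legendreSquares_add_C_mul_sub hab hμ0 hμsub hμadd hadd hsub haddμ hsubμ
  refine ⟨l', _, _, hl0', hl1', hleg, ?_⟩
  rw [natDegree_C_mul hc, max_natDegree_add_sub, ← sq, ← sq, natDegree_pow, natDegree_pow]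
  omega

theorem LegendreSquares.natDegree_eq_zero {l : K} (hl0 : l ≠ 0) (hl1 : l ≠ 1) {s t : K[X]}
    (h : LegendreSquares l s t) : s.natDegree = 0 ∧ t.natDegree = 0 := by
  suffices max s.natDegree t.natDegree = 0 by omega
  induction hn : max s.natDegree t.natDegree using Nat.strong_induction_on generalizing l s t with
  | _ n ih =>
  obtain ⟨l', s', t', hl0', hl1', h', hdeg⟩ := h.exists_halving hl0 hl1
  rcases Nat.eq_zero_or_pos n with hn0 | hpos
  · exact hn0
  · have := ih _ (by omega) hl0' hl1' h' rfl
    omega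

theorem natDegree_eq_zero_of_isSquare_mul_mul_sub_C_mul_mul_sub_C_mul {a b : K} (ha : a ≠ 0)
    (hb : b ≠ 0) (hab : a ≠ b) {s t : K[X]} (hst : IsCoprime s t)
    (hsq : IsSquare (s * t * (s - C a * t) * (s - C b * t))) :
    s.natDegree = 0 ∧ t.natDegree = 0 := by
  have hsa : IsCoprime s (s - C a * t) := by
    simpa using isCoprime_sub_C_mul_sub_C_mul hst ha.symm
  have hsb : IsCoprime s (s - C b * t) := by
    simpa using isCoprime_sub_C_mul_sub_C_mul hst hb.symm
  have hta : IsCoprime t (s - C a * t) := by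
    rw [mul_comm]; exact IsCoprime.sub_mul_left_right_iff.mpr hst.symm
  have htb : IsCoprime t (s - C b * t) := by
    rw [mul_comm]; exact IsCoprime.sub_mul_left_right_iff.mpr hst.symm
  have hab' : IsCoprime (s - C a * t) (s - C b * t) := isCoprime_sub_C_mul_sub_C_mul hst hab
  have hs : IsSquare s := isSquare_of_isCoprime_of_isSquare_mul
    ((hst.mul_right hsa).mul_right hsb) (by convert hsq using 1; ring)
  have ht : IsSquare t := isSquare_of_isCoprime_of_isSquare_mul
    ((hst.symm.mul_right hta).mul_right htb) (by convert hsq using 1; ring)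
  have hsa' : IsSquare (s - C a * t) := isSquare_of_isCoprime_of_isSquare_mul
    ((hsa.symm.mul_right hta.symm).mul_right hab') (by convert hsq using 1; ring)
  have hleg : LegendreSquares (b / a) s (C a * t) := by
    refine ⟨(isCoprime_mul_unit_left_right (isUnit_C.mpr ha.isUnit) _ _).mpr hst, hs,
      (isSquare_C a).mul ht, hsa', ?_⟩
    rw [← mul_assoc, ← C_mul, div_mul_cancel₀ b ha]
    exact isSquare_of_isCoprime_of_isSquare_mul
      ((hsb.symm.mul_right htb.symm).mul_right hab'.symm) (by convert hsq using 1; ring)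
  have hba : b / a ≠ 1 := fun h ↦ hab ((div_eq_one_iff_eq ha).mp h).symm
  simpa only [natDegree_C_mul ha] using hleg.natDegree_eq_zero (div_ne_zero hb ha) hba

end Polynomial

namespace RatFunc

variable {K : Type*} [Field K]

theorem exists_eq_C_of_natDegree_num_eq_zero_of_natDegree_denom_eq_zero {x : RatFunc K}
    (hnum : x.num.natDegree = 0) (hdenom : x.denom.natDegree = 0) : ∃ c, x = C c := by
  refine ⟨x.num.coeff 0, ?_⟩
  conv_lhs => rw [← num_div_denom x, (monic_denom x).natDegree_eq_zero.mp hdenom,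
    eq_C_of_natDegree_eq_zero hnum]
  rw [map_one, div_one, algebraMap_C]

theorem isSquare_num_mul_denom_mul_sub_C_mul_mul_sub_C_mul {x y : RatFunc K} {a b : K}
    (h : y ^ 2 = x * (x - C a) * (x - C b)) :
    IsSquare (x.num * x.denom * (x.num - .C a * x.denom) * (x.num - .C b * x.denom)) := by
  set P := algebraMap K[X] (RatFunc K) x.num
  set Q := algebraMap K[X] (RatFunc K) x.denom
  have hQ : Q ≠ 0 := algebraMap_ne_zero x.denom_ne_zero
  have hx : x = P / Q := (num_div_denom x).symm
  have hyQ : (y * Q ^ 2) ^ 2 = algebraMap K[X] (RatFunc K)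
      (x.num * x.denom * (x.num - .C a * x.denom) * (x.num - .C b * x.denom)) := by
    simp only [map_mul, map_sub, algebraMap_C]
    change _ = P * Q * (P - C a * Q) * (P - C b * Q)
    rw [mul_pow, h, hx]
    field_simp
  obtain ⟨v, hv⟩ := IsIntegrallyClosed.exists_algebraMap_eq_of_isIntegral_pow two_pos
    (hyQ ▸ isIntegral_algebraMap)
  exact ⟨v, algebraMap_injective K (by rw [← hyQ, ← hv, ← map_pow, sq])⟩

end RatFunc

theorem elliptic_curve_no_rational_param :
    ¬ ∃ φz φu : RatFunc ℚ, (¬ ∃ c : ℚ, φz = RatFunc.C c) ∧ (¬ ∃ c : ℚ, φu = RatFunc.C c) ∧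
      φu^2 = (1 + 4*φz) * φz * (φz - 4) := by
  rintro ⟨φz, φu, hz, -, heq⟩
  have hcurve : (φu / 2) ^ 2 = φz * (φz - RatFunc.C 4) * (φz - RatFunc.C (-1 / 4)) := by
    simp only [map_ofNat, map_div₀, map_neg, map_one]
    linear_combination heq / 4
  set f := mapRingHom (algebraMap ℚ (AlgebraicClosure ℚ))
  have hsq := (RatFunc.isSquare_num_mul_denom_mul_sub_C_mul_mul_sub_C_mul hcurve).map f
  simp only [map_mul, map_sub, f, coe_mapRingHom, map_C] at hsq
  have hdeg := natDegree_eq_zero_of_isSquare_mul_mul_sub_C_mul_mul_sub_C_mul (by norm_num)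
    (by norm_num) (by norm_num) (φz.isCoprime_num_denom.map f) hsq
  rw [coe_mapRingHom, natDegree_map, natDegree_map] at hdeg
  exact hz (RatFunc.exists_eq_C_of_natDegree_num_eq_zero_of_natDegree_denom_eq_zero hdeg.1 hdeg.2)
end

section
/- Let d be even and let F_{d/2−1}, F_{d/2}, F_{d/2+1} ∈ ℂ[x₁,…,x_n,z] be homogeneous of the indicated degrees. Suppose rational functions (φ_u, φ_{x₁}, …, φ_{x_n}) in t₁,…,t_n satisfy φ_u² = F_{d/2}(φ_x,1)² − 4·F_{d/2+1}(φ_x,1)·F_{d/2−1}(φ_x,1), where φ_x = (φ_{x₁},…,φ_{x_n}). Define λ = (−F_{d/2}(φ_x,1) + φ_u)/(2·F_{d/2+1}(φ_x,1)) (assuming F_{d/2+1}(φ_x,1) ≠ 0). Then (λφ_{x₁}, …, λφ_{x_n}, λ) satisfies F_{d/2+1} + F_{d/2} + F_{d/2−1} = 0. -/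
open MvPolynomial

lemma aeval_mul_smul {σ : Type*} {R : Type*} [CommRing R] (P : MvPolynomial σ ℂ)
    {m : ℕ} (hP : P.IsHomogeneous m) [Algebra ℂ R] (c : R) (v : σ → R) :
    MvPolynomial.aeval (fun i => c * v i) P = c ^ m * MvPolynomial.aeval v P := by
  rw [aeval_def, aeval_def, eval₂_eq, eval₂_eq, Finset.mul_sum]
  apply Finset.sum_congr rfl
  intro d hd
  have hdeg : ∑ i ∈ d.support, d i = m := by
    have := hP (mem_support_iff.mp hd)
    simpa [Finsupp.weight_apply, Finsupp.sum] using this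
  rw [← hdeg]
  simp only [mul_pow, Finset.prod_mul_distrib, Finset.prod_pow_eq_pow_sum]
  ring

set_option synthInstance.maxHeartbeats 1000000 in
set_option maxHeartbeats 1000000 in
theorem param_to_sum_hypersurface
    (n k : ℕ) (hk : 1 ≤ k)
    (Fp F Fm : MvPolynomial (Fin (n+1)) ℂ)
    (hFp : Fp.IsHomogeneous (k+1)) (hF : F.IsHomogeneous k)
    (hFm : Fm.IsHomogeneous (k-1))
    (φu : FractionRing (MvPolynomial (Fin n) ℂ))
    (φx : Fin n → FractionRing (MvPolynomial (Fin n) ℂ))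
    (hne : MvPolynomial.aeval (Fin.snoc φx 1) Fp ≠ 0)
    (hparam : φu^2 = (MvPolynomial.aeval (Fin.snoc φx 1) F)^2
        - 4 * MvPolynomial.aeval (Fin.snoc φx 1) Fp
            * MvPolynomial.aeval (Fin.snoc φx 1) Fm)
    (lam : FractionRing (MvPolynomial (Fin n) ℂ))
    (hlam : lam = (-(MvPolynomial.aeval (Fin.snoc φx 1) F) + φu)
        / (2 * MvPolynomial.aeval (Fin.snoc φx 1) Fp)) :
    MvPolynomial.aeval (Fin.snoc (fun i => lam * φx i) lam) (Fp + F + Fm) = 0 := by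
  obtain ⟨m, rfl⟩ : ∃ m, k = m + 1 := ⟨k - 1, by omega⟩
  simp only [Nat.add_sub_cancel] at hFm ⊢
  set A := MvPolynomial.aeval (Fin.snoc φx 1) Fp with hA
  set B := MvPolynomial.aeval (Fin.snoc φx 1) F with hB
  set C := MvPolynomial.aeval (Fin.snoc φx 1) Fm with hC
  have hpoint : (Fin.snoc (fun i => lam * φx i) lam : Fin (n+1) → _)
      = fun j => lam * (Fin.snoc φx 1 : Fin (n+1) → FractionRing (MvPolynomial (Fin n) ℂ)) j := by
    funext j
    refine Fin.lastCases ?_ ?_ j <;> simp [Fin.snoc_castSucc, Fin.snoc_last]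
  have h2 : (2 : FractionRing (MvPolynomial (Fin n) ℂ)) ≠ 0 := two_ne_zero
  have hden : 2 * A ≠ 0 := mul_ne_zero h2 hne
  have hl2 : lam * (2 * A) = -B + φu := by
    rw [hlam, div_mul_cancel₀ _ hden]
  have h0 : (2 * A) * (2 * A) * (lam ^ 2 * A + lam * B + C) = 0 := by
    linear_combination (A * (lam * (2 * A) + (-B + φu) + 2 * B)) * hl2 + A * hparam
  have hquad : lam ^ 2 * A + lam * B + C = 0 := by
    rcases mul_eq_zero.mp h0 with h | h
    · exact absurd h (mul_ne_zero hden hden)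
    · exact h
  rw [hpoint, map_add, map_add,
    aeval_mul_smul Fp hFp, aeval_mul_smul F hF, aeval_mul_smul Fm hFm,
    ← hA, ← hB, ← hC]
  linear_combination (lam ^ m) * hquad
end

section
/- Let d be even and F_{d/2−1}, F_{d/2}, F_{d/2+1} homogeneous in x₁,…,x_n,z of the indicated degrees. Suppose rational functions (ψ_{x₁},…,ψ_{x_n},ψ_z) with ψ_z not identically zero satisfy F_{d/2+1}(ψ_x,ψ_z) + F_{d/2}(ψ_x,ψ_z) + F_{d/2−1}(ψ_x,ψ_z) = 0. Define φ_{x_i} = ψ_{x_i}/ψ_z and φ_u = 2·F_{d/2+1}(φ_x,1)·ψ_z + F_{d/2}(φ_x,1). Then φ_u² = F_{d/2}(φ_x,1)² − 4·F_{d/2+1}(φ_x,1)·F_{d/2−1}(φ_x,1). -/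
open MvPolynomial

lemma aeval_homog_smul {σ : Type*} {K : Type*} [CommRing K] [Algebra ℂ K]
    (G : MvPolynomial σ ℂ) {k : ℕ} (h : G.IsHomogeneous k)
    (c : K) (f : σ → K) :
    MvPolynomial.aeval (fun i => c * f i) G = c ^ k * MvPolynomial.aeval f G := by
  rw [aeval_def, aeval_def, eval₂_eq, eval₂_eq, Finset.mul_sum]
  refine Finset.sum_congr rfl fun d hd => ?_
  have hdeg : d.degree = k := by
    have := h (by simpa using hd)
    rwa [Finsupp.degree_eq_weight_one]
  simp only [mul_pow, Finset.prod_mul_distrib, Finset.prod_pow_eq_pow_sum]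
  rw [show ∑ i ∈ d.support, d i = k from hdeg ▸ rfl]
  ring

set_option maxHeartbeats 2000000 in
set_option synthInstance.maxHeartbeats 1000000 in
theorem sum_hypersurface_to_param
    (n k : ℕ) (hk : 1 ≤ k)
    (Fp F Fm : MvPolynomial (Fin (n+1)) ℂ)
    (hFp : Fp.IsHomogeneous (k+1)) (hF : F.IsHomogeneous k)
    (hFm : Fm.IsHomogeneous (k-1))
    (ψx : Fin n → FractionRing (MvPolynomial (Fin n) ℂ))
    (ψz : FractionRing (MvPolynomial (Fin n) ℂ)) (hz : ψz ≠ 0)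
    (hparam : MvPolynomial.aeval (Fin.snoc ψx ψz) (Fp + F + Fm) = 0)
    (φx : Fin n → FractionRing (MvPolynomial (Fin n) ℂ))
    (hφx : ∀ i, φx i = ψx i / ψz)
    (φu : FractionRing (MvPolynomial (Fin n) ℂ))
    (hφu : φu = 2 * MvPolynomial.aeval (Fin.snoc φx 1) Fp * ψz
        + MvPolynomial.aeval (Fin.snoc φx 1) F) :
    φu^2 = (MvPolynomial.aeval (Fin.snoc φx 1) F)^2
        - 4 * MvPolynomial.aeval (Fin.snoc φx 1) Fp
            * MvPolynomial.aeval (Fin.snoc φx 1) Fm := by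
  have hsnoc : (Fin.snoc ψx ψz : Fin (n+1) → FractionRing (MvPolynomial (Fin n) ℂ))
      = fun i => ψz * (Fin.snoc φx 1 : Fin (n+1) → FractionRing (MvPolynomial (Fin n) ℂ)) i := by
    funext i
    induction i using Fin.lastCases with
    | last => simp
    | cast j =>
      simp only [Fin.snoc_castSucc]
      rw [hφx j]
      field_simp
  set P := MvPolynomial.aeval (Fin.snoc φx (1:FractionRing (MvPolynomial (Fin n) ℂ))) Fp with hP
  set Q := MvPolynomial.aeval (Fin.snoc φx (1:FractionRing (MvPolynomial (Fin n) ℂ))) F with hQ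
  set R := MvPolynomial.aeval (Fin.snoc φx (1:FractionRing (MvPolynomial (Fin n) ℂ))) Fm with hR
  have hsum : ψz^(k+1) * P + ψz^k * Q + ψz^(k-1) * R = 0 := by
    have := hparam
    rw [map_add, map_add, hsnoc,
      aeval_homog_smul Fp hFp, aeval_homog_smul F hF, aeval_homog_smul Fm hFm] at this
    exact this
  have hkey : ψz^2 * P + ψz * Q + R = 0 := by
    obtain ⟨m, hm⟩ : ∃ m, k = m + 1 := ⟨k-1, by omega⟩
    subst hm
    simp only [Nat.add_sub_cancel] at hsum
    apply mul_left_cancel₀ (pow_ne_zero m hz)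
    rw [mul_zero]
    calc ψz^m * (ψz^2 * P + ψz * Q + R)
        = ψz^(m+1+1) * P + ψz^(m+1) * Q + ψz^m * R := by ring
      _ = 0 := hsum
  have hRR : R = - (ψz^2 * P + ψz * Q) := by linear_combination hkey
  rw [hφu, hRR]
  ring
end
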